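/- arXiv:1708.00220 — 8 statements merged into one kernel-verified Lean document; each statement's English description precedes it below -/
import Mathlib

section
/- Let A be an f-adic ring and let π : A → A^hd be its Hausdorff quotient. If A⁺ is an open subring of A contained in A° and integrally closed in A, then π(A⁺) is an open subring of A^hd contained in (A^hd)° and integrally closed in A^hd. Conversely, if B⁺ is an open subring of A^hd contained in (A^hd)° and integrally closed in A^hd, then π⁻¹(B⁺) is an open subring of A contained in A° and integrally closed in A. -/
open Filter Topology

/-- A subset `S` of a topological ring is bounded if for every neighbourhood `U` of `0`
there is a neighbourhood `V` of `0` with `V · S ⊆ U`. -/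
def IsBoundedSubset {A : Type*} [CommRing A] [TopologicalSpace A] (S : Set A) : Prop :=
  ∀ U ∈ 𝓝 (0 : A), ∃ V ∈ 𝓝 (0 : A), ∀ v ∈ V, ∀ s ∈ S, v * s ∈ U

/-- An element of a topological ring is power-bounded if the set of its powers `aⁿ`, `n ≥ 1`,
is bounded. -/
def IsPowerBounded {A : Type*} [CommRing A] [TopologicalSpace A] (a : A) : Prop :=
  IsBoundedSubset {x : A | ∃ n : ℕ, 1 ≤ n ∧ x = a ^ n}

/-- `A°`, the set of power-bounded elements of a topological ring. -/
def powerBounded (A : Type*) [CommRing A] [TopologicalSpace A] : Set A :=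
  {a : A | IsPowerBounded a}

/-- `I₀` is an ideal of definition of the subring `A₀` of the topological ring `A` if it is
finitely generated and its powers form a basis of neighbourhoods of `0` in `A`. -/
def IsIdealOfDefinition {A : Type*} [CommRing A] [TopologicalSpace A]
    (A₀ : Subring A) (I₀ : Ideal A₀) : Prop :=
  I₀.FG ∧ (𝓝 (0 : A)).HasBasis (fun n : ℕ => 1 ≤ n)
    (fun n => ⇑A₀.subtype '' ((I₀ ^ n : Ideal A₀) : Set A₀))

/-- A ring of definition of a topological ring is an open subring admitting an ideal of
definition. -/
def IsRingOfDefinition {A : Type*} [CommRing A] [TopologicalSpace A] (A₀ : Subring A) : Prop :=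
  IsOpen (A₀ : Set A) ∧ ∃ I₀ : Ideal A₀, IsIdealOfDefinition A₀ I₀

/-- A topological commutative ring is f-adic if it admits a ring of definition. -/
def IsFAdic (A : Type*) [CommRing A] [TopologicalSpace A] : Prop :=
  ∃ A₀ : Subring A, IsRingOfDefinition A₀

/-- A subring `S` of `A` is integrally closed in `A` if every element of `A` integral
over `S` lies in `S`. -/
def IsIntegrallyClosedSubring {A : Type*} [CommRing A] (S : Subring A) : Prop :=
  ∀ x : A, IsIntegral S x → x ∈ S

/-!
The kernel `cl({0})` of `π` lies in every neighbourhood of `0`, in particular in every open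
subring. Hence bounded sets and integrality transfer along the open continuous surjection `π` in
both directions: an equation `v·s ∈ U` in `A^hd` only loses an error term from `cl({0})`, which
an open neighbourhood `W` with `W + W ⊆ U` absorbs; and a monic equation for `π x` over `π(A⁺)`
lifts to a monic `p` over `A⁺` with `p(x) ∈ cl({0}) ⊆ A⁺`, which makes `x` integral over `A⁺`.
-/

open Polynomial

theorem Ideal.coe_closure_bot_subset {A : Type*} [CommRing A] [TopologicalSpace A]
    [IsTopologicalRing A] {U : Set A} (hU : U ∈ 𝓝 (0 : A)) :
    ((⊥ : Ideal A).closure : Set A) ⊆ U := by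
  intro x hx
  rw [Ideal.coe_closure, Submodule.bot_coe, ← specializes_iff_mem_closure] at hx
  exact mem_of_mem_nhds (hx.symm hU)

section Boundedness

variable {A B : Type*} [CommRing A] [TopologicalSpace A] [CommRing B] [TopologicalSpace B]
  {f : A →+* B}

theorem IsBoundedSubset.image (hc : Continuous f) (ho : IsOpenMap f) {S : Set A}
    (hS : IsBoundedSubset S) : IsBoundedSubset (f '' S) := by
  intro U hU
  obtain ⟨V, hV, hVS⟩ := hS (f ⁻¹' U) (hc.tendsto' 0 0 (map_zero f) hU)
  refine ⟨f '' V, map_zero f ▸ ho.image_mem_nhds hV, ?_⟩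
  rintro _ ⟨v, hv, rfl⟩ _ ⟨s, hs, rfl⟩
  rw [← map_mul]
  exact hVS v hv s hs

theorem IsBoundedSubset.of_image [IsTopologicalRing A] (hc : Continuous f) (ho : IsOpenMap f)
    (hker : RingHom.ker f ≤ (⊥ : Ideal A).closure) {S : Set A}
    (hS : IsBoundedSubset (f '' S)) : IsBoundedSubset S := by
  intro U hU
  obtain ⟨W, hW, hWW⟩ := exists_nhds_zero_half hU
  obtain ⟨V, hV, hVS⟩ := hS (f '' W) (map_zero f ▸ ho.image_mem_nhds hW)
  refine ⟨f ⁻¹' V, hc.tendsto' 0 0 (map_zero f) hV, fun v hv s hs => ?_⟩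
  obtain ⟨w, hw, hfw⟩ := hVS (f v) hv (f s) ⟨s, hs, rfl⟩
  have hdiff : v * s - w ∈ W :=
    Ideal.coe_closure_bot_subset hW <| hker <| by
      rw [RingHom.mem_ker, map_sub, map_mul, hfw, sub_self]
  simpa using hWW w hw _ hdiff

omit [TopologicalSpace A] [TopologicalSpace B] in
theorem powers_map_eq_image (a : A) :
    {x : B | ∃ n : ℕ, 1 ≤ n ∧ x = f a ^ n} = f '' {x : A | ∃ n : ℕ, 1 ≤ n ∧ x = a ^ n} := by
  ext x
  constructor
  · rintro ⟨n, hn, rfl⟩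
    exact ⟨a ^ n, ⟨n, hn, rfl⟩, map_pow f a n⟩
  · rintro ⟨_, ⟨n, hn, rfl⟩, rfl⟩
    exact ⟨n, hn, map_pow f a n⟩

theorem IsPowerBounded.map (hc : Continuous f) (ho : IsOpenMap f) {a : A}
    (ha : IsPowerBounded a) : IsPowerBounded (f a) := by
  unfold IsPowerBounded
  rw [powers_map_eq_image]
  exact ha.image hc ho

theorem IsPowerBounded.of_map [IsTopologicalRing A] (hc : Continuous f) (ho : IsOpenMap f)
    (hker : RingHom.ker f ≤ (⊥ : Ideal A).closure) {a : A} (ha : IsPowerBounded (f a)) :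
    IsPowerBounded a := by
  unfold IsPowerBounded at ha
  rw [powers_map_eq_image] at ha
  exact ha.of_image hc ho hker

end Boundedness

section Integrality

variable {A B : Type*} [CommRing A] [CommRing B] (f : A →+* B)

theorem IsIntegral.of_map_subring {S : Subring A}
    (hker : (RingHom.ker f : Set A) ⊆ S) {x : A} (hx : IsIntegral (S.map f) (f x)) :
    IsIntegral S x := by
  obtain ⟨q, hq, hqx⟩ := hx
  let φ : S →+* S.map f := f.restrict S (S.map f) fun _ hx => ⟨_, hx, rfl⟩
  have hφ : Function.Surjective φ := by
    rintro ⟨_, a, ha, rfl⟩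
    exact ⟨⟨a, ha⟩, rfl⟩
  obtain ⟨p, rfl, -, hp⟩ :=
    lifts_and_natDegree_eq_and_monic (map_surjective φ hφ q) hq
  have hpx : aeval x p ∈ RingHom.ker f := by
    rw [RingHom.mem_ker, aeval_def, hom_eval₂, ← hqx, eval₂_map]
    rfl
  have hS : ∀ y ∈ S, IsIntegral S y := fun y hy => isIntegral_algebraMap (x := (⟨y, hy⟩ : S))
  by_cases hdeg : p.natDegree = 0
  · -- then `p = 1`, so `1 ∈ ker f` and the kernel is everything
    rw [hp.natDegree_eq_zero.mp hdeg, map_one] at hpx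
    exact hS x (hker (by simpa using (RingHom.ker f).mul_mem_left x hpx))
  · exact (hS _ (hker hpx)).of_aeval_monic hp hdeg

variable {f}

theorem IsIntegrallyClosedSubring.map {S : Subring A} (hS : IsIntegrallyClosedSubring S)
    (hf : Function.Surjective f) (hker : (RingHom.ker f : Set A) ⊆ S) :
    IsIntegrallyClosedSubring (S.map f) := by
  intro y hy
  obtain ⟨x, rfl⟩ := hf y
  exact ⟨x, hS x (hy.of_map_subring f hker), rfl⟩

theorem IsIntegrallyClosedSubring.comap {S : Subring B} (hS : IsIntegrallyClosedSubring S) :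
    IsIntegrallyClosedSubring (S.comap f) :=
  fun x hx => hS (f x) <|
    hx.map_of_comp_eq (f.restrict (S.comap f) S fun _ h => h) f rfl

end Integrality

theorem statement4_general {A : Type*} [CommRing A] [TopologicalSpace A] [IsTopologicalRing A] :
    (∀ Aplus : Subring A, IsOpen (Aplus : Set A) → (Aplus : Set A) ⊆ powerBounded A →
      IsIntegrallyClosedSubring Aplus →
      IsOpen ((Aplus.map (Ideal.Quotient.mk ((⊥ : Ideal A).closure)) :
          Subring (A ⧸ (⊥ : Ideal A).closure)) : Set (A ⧸ (⊥ : Ideal A).closure)) ∧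
      ((Aplus.map (Ideal.Quotient.mk ((⊥ : Ideal A).closure)) :
          Subring (A ⧸ (⊥ : Ideal A).closure)) : Set (A ⧸ (⊥ : Ideal A).closure)) ⊆
        powerBounded (A ⧸ (⊥ : Ideal A).closure) ∧
      IsIntegrallyClosedSubring (Aplus.map (Ideal.Quotient.mk ((⊥ : Ideal A).closure)))) ∧
    (∀ Bplus : Subring (A ⧸ (⊥ : Ideal A).closure),
      IsOpen (Bplus : Set (A ⧸ (⊥ : Ideal A).closure)) →
      (Bplus : Set (A ⧸ (⊥ : Ideal A).closure)) ⊆ powerBounded (A ⧸ (⊥ : Ideal A).closure) →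
      IsIntegrallyClosedSubring Bplus →
      IsOpen ((Bplus.comap (Ideal.Quotient.mk ((⊥ : Ideal A).closure)) : Subring A) : Set A) ∧
      ((Bplus.comap (Ideal.Quotient.mk ((⊥ : Ideal A).closure)) : Subring A) : Set A) ⊆
        powerBounded A ∧
      IsIntegrallyClosedSubring (Bplus.comap (Ideal.Quotient.mk ((⊥ : Ideal A).closure)))) := by
  set J := (⊥ : Ideal A).closure
  have hπ := QuotientRing.isOpenQuotientMap_mk J
  have hker : RingHom.ker (Ideal.Quotient.mk J) ≤ J := Ideal.mk_ker.le
  refine ⟨fun Aplus hopen hpb hic => ⟨?_, ?_, ?_⟩, fun Bplus hopen hpb hic => ⟨?_, ?_, ?_⟩⟩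
  · exact hπ.isOpenMap _ hopen
  · rintro _ ⟨a, ha, rfl⟩
    exact (hpb ha).map hπ.continuous hπ.isOpenMap
  · exact hic.map hπ.surjective <|
      (SetLike.coe_subset_coe.mpr hker).trans
        (Ideal.coe_closure_bot_subset (hopen.mem_nhds Aplus.zero_mem))
  · exact hopen.preimage hπ.continuous
  · exact fun a ha => (hpb ha).of_map hπ.continuous hπ.isOpenMap hker
  · exact hic.comap

theorem statement4 {A : Type*} [CommRing A] [TopologicalSpace A] [IsTopologicalRing A]
    (hA : IsFAdic A) :
    (∀ Aplus : Subring A, IsOpen (Aplus : Set A) → (Aplus : Set A) ⊆ powerBounded A →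
      IsIntegrallyClosedSubring Aplus →
      IsOpen ((Aplus.map (Ideal.Quotient.mk ((⊥ : Ideal A).closure)) :
          Subring (A ⧸ (⊥ : Ideal A).closure)) : Set (A ⧸ (⊥ : Ideal A).closure)) ∧
      ((Aplus.map (Ideal.Quotient.mk ((⊥ : Ideal A).closure)) :
          Subring (A ⧸ (⊥ : Ideal A).closure)) : Set (A ⧸ (⊥ : Ideal A).closure)) ⊆
        powerBounded (A ⧸ (⊥ : Ideal A).closure) ∧
      IsIntegrallyClosedSubring (Aplus.map (Ideal.Quotient.mk ((⊥ : Ideal A).closure)))) ∧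
    (∀ Bplus : Subring (A ⧸ (⊥ : Ideal A).closure),
      IsOpen (Bplus : Set (A ⧸ (⊥ : Ideal A).closure)) →
      (Bplus : Set (A ⧸ (⊥ : Ideal A).closure)) ⊆ powerBounded (A ⧸ (⊥ : Ideal A).closure) →
      IsIntegrallyClosedSubring Bplus →
      IsOpen ((Bplus.comap (Ideal.Quotient.mk ((⊥ : Ideal A).closure)) : Subring A) : Set A) ∧
      ((Bplus.comap (Ideal.Quotient.mk ((⊥ : Ideal A).closure)) : Subring A) : Set A) ⊆
        powerBounded A ∧
      IsIntegrallyClosedSubring (Bplus.comap (Ideal.Quotient.mk ((⊥ : Ideal A).closure)))) :=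
  statement4_general
end

section
/- Let A be an f-adic ring and let γ : A → Â be the canonical map to its completion. Then: (i) for every open subring A₀ of A, the topological closure of γ(A₀) in Â is an open subring of Â and γ⁻¹(cl(γ(A₀))) = A₀; (ii) for every open subring B₀ of Â, cl(γ(γ⁻¹(B₀))) = B₀. In other words, the maps A₀ ↦ cl(γ(A₀)) and B₀ ↦ γ⁻¹(B₀) are mutually inverse bijections between the set of open subrings of A and the set of open subrings of Â. -/
open Filter Topology

/-! Open subgroups of a topological group are closed, and `γ` is a dense inducing map into a
topological group. So the closure of `γ(A₀)` is a subgroup which is a neighbourhood of `0`, hence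
open, and its preimage is the closure of `A₀`, which is `A₀`; an open subgroup `B₀` of `Â` is
clopen, hence the closure of its trace on the dense image of `γ`. -/

theorem IsDenseInducing.isOpen_closure_image_addSubgroup {G H F : Type*} [AddGroup G]
    [TopologicalSpace G] [AddGroup H] [TopologicalSpace H] [IsTopologicalAddGroup H]
    [FunLike F G H] [AddMonoidHomClass F G H] {f : F} (hf : IsDenseInducing f)
    {U : AddSubgroup G} (hU : IsOpen (U : Set G)) :
    IsOpen (closure (f '' U)) := by
  have hmem : closure (f '' U) ∈ 𝓝 (0 : H) := by
    simpa using hf.closure_image_mem_nhds (hU.mem_nhds U.zero_mem)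
  exact (U.map (f : G →+ H)).topologicalClosure.isOpen_of_mem_nhds (g := (0 : H)) hmem

theorem Topology.IsInducing.preimage_closure_image_of_isClosed {X Y : Type*}
    [TopologicalSpace X] [TopologicalSpace Y] {f : X → Y} (hf : IsInducing f) {s : Set X}
    (hs : IsClosed s) : f ⁻¹' closure (f '' s) = s := by
  rw [← hf.closure_eq_preimage_closure_image, hs.closure_eq]

theorem DenseRange.closure_image_preimage_of_isClopen {X Y : Type*}
    [TopologicalSpace X] [TopologicalSpace Y] {f : X → Y} (hf : DenseRange f) {s : Set Y}
    (hs : IsClopen s) : closure (f '' (f ⁻¹' s)) = s :=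
  (closure_minimal (Set.image_preimage_subset f s) hs.isClosed).antisymm
    (hf.subset_closure_image_preimage_of_isOpen hs.isOpen)

theorem statement5_general {A : Type*} [CommRing A] [UniformSpace A] [IsUniformAddGroup A]
    [IsTopologicalRing A]
    (γ : A →+* UniformSpace.Completion A)
    (hγ : γ = UniformSpace.Completion.coeRingHom) :
    (∀ A₀ : Subring A, IsOpen (A₀ : Set A) →
      IsOpen (closure (⇑γ '' (A₀ : Set A))) ∧
      ⇑γ ⁻¹' closure (⇑γ '' (A₀ : Set A)) = (A₀ : Set A)) ∧
    (∀ B₀ : Subring (UniformSpace.Completion A),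
      IsOpen (B₀ : Set (UniformSpace.Completion A)) →
      closure (⇑γ '' (⇑γ ⁻¹' (B₀ : Set (UniformSpace.Completion A))))
        = (B₀ : Set (UniformSpace.Completion A))) := by
  have hγ_dense : IsDenseInducing γ := hγ ▸ UniformSpace.Completion.isDenseInducing_coe
  refine ⟨fun A₀ hA₀ => ⟨?_, ?_⟩, fun B₀ hB₀ => ?_⟩
  · exact hγ_dense.isOpen_closure_image_addSubgroup (U := A₀.toAddSubgroup) hA₀
  · exact hγ_dense.isInducing.preimage_closure_image_of_isClosed
      (A₀.toAddSubgroup.isClosed_of_isOpen hA₀)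
  · exact hγ_dense.dense.closure_image_preimage_of_isClopen
      ⟨B₀.toAddSubgroup.isClosed_of_isOpen hB₀, hB₀⟩

theorem statement5 {A : Type*} [CommRing A] [UniformSpace A] [IsUniformAddGroup A]
    [IsTopologicalRing A] (hA : IsFAdic A)
    (γ : A →+* UniformSpace.Completion A)
    (hγ : γ = UniformSpace.Completion.coeRingHom) :
    (∀ A₀ : Subring A, IsOpen (A₀ : Set A) →
      IsOpen (closure (⇑γ '' (A₀ : Set A))) ∧
      ⇑γ ⁻¹' closure (⇑γ '' (A₀ : Set A)) = (A₀ : Set A)) ∧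
    (∀ B₀ : Subring (UniformSpace.Completion A),
      IsOpen (B₀ : Set (UniformSpace.Completion A)) →
      closure (⇑γ '' (⇑γ ⁻¹' (B₀ : Set (UniformSpace.Completion A))))
        = (B₀ : Set (UniformSpace.Completion A))) :=
  statement5_general γ hγ
end

section
/- Let A be an f-adic ring and let γ : A → Â be the canonical map to its completion. Then the topological closure of γ(A°) in Â is equal to (Â)°, the set of power-bounded elements of Â. -/
open Filter Topology

open scoped Pointwise

/-!
An f-adic ring `A` is nonarchimedean, hence so is `Â`, and in a nonarchimedean ring
power-bounded elements are stable under addition (the powers of `b + c` lie in the additive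
subgroup generated by the bounded set of products `bⁱcʲ`). The closure in `Â` of the bounded open
ring of definition `A₀` is a bounded subring, hence a neighbourhood of `0` made of power-bounded
elements. Therefore `Â°` is both open and closed. As `γ` is a dense embedding, power-boundedness
of `γ a` is equivalent to that of `a`, so `γ(A°) = γ(A) ∩ Â°`, and density of `γ(A)` in the clopen
set `Â°` gives the claim.
-/

section Bounded

variable {B : Type*} [CommRing B] [TopologicalSpace B]

theorem IsBoundedSubset.mono {S T : Set B} (hS : IsBoundedSubset S) (hTS : T ⊆ S) :
    IsBoundedSubset T := fun U hU =>
  let ⟨V, hV, hVS⟩ := hS U hU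
  ⟨V, hV, fun v hv t ht => hVS v hv t (hTS ht)⟩

theorem IsBoundedSubset.mul {S T : Set B} (hS : IsBoundedSubset S) (hT : IsBoundedSubset T) :
    IsBoundedSubset (S * T) := by
  intro U hU
  obtain ⟨W, hW, hWT⟩ := hT U hU
  obtain ⟨V, hV, hVS⟩ := hS W hW
  refine ⟨V, hV, ?_⟩
  rintro v hv _ ⟨s, hs, t, ht, rfl⟩
  rw [← mul_assoc]
  exact hWT _ (hVS v hv s hs) t ht

theorem IsBoundedSubset.addSubgroupClosure [NonarchimedeanRing B] {S : Set B}
    (hS : IsBoundedSubset S) : IsBoundedSubset (AddSubgroup.closure S : Set B) := by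
  intro U hU
  obtain ⟨W, hWU⟩ := NonarchimedeanRing.is_nonarchimedean U hU
  obtain ⟨V, hV, hVS⟩ := hS W W.mem_nhds_zero
  refine ⟨V, hV, fun v hv x hx => hWU ?_⟩
  have : AddSubgroup.closure S ≤ (W : AddSubgroup B).comap (AddMonoidHom.mulLeft v) :=
    (AddSubgroup.closure_le _).2 fun s hs => hVS v hv s hs
  exact this hx

theorem isPowerBounded_iff_isBoundedSubset_range_pow {a : B} :
    IsPowerBounded a ↔ IsBoundedSubset (Set.range (a ^ · : ℕ → B)) := by
  refine ⟨fun ha U hU => ?_, fun ha => ha.mono ?_⟩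
  · obtain ⟨V, hV, hVa⟩ := ha U hU
    refine ⟨V ∩ U, inter_mem hV hU, ?_⟩
    rintro v ⟨hvV, hvU⟩ _ ⟨n, rfl⟩
    rcases Nat.eq_zero_or_pos n with rfl | hn
    · simpa using hvU
    · exact hVa v hvV _ ⟨n, hn, rfl⟩
  · rintro _ ⟨n, -, rfl⟩
    exact ⟨n, rfl⟩

theorem IsPowerBounded.add [NonarchimedeanRing B] {b c : B} (hb : IsPowerBounded b)
    (hc : IsPowerBounded c) : IsPowerBounded (b + c) := by
  rw [isPowerBounded_iff_isBoundedSubset_range_pow] at hb hc ⊢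
  refine (hb.mul hc).addSubgroupClosure.mono ?_
  rintro _ ⟨n, rfl⟩
  change (b + c) ^ n ∈ _
  rw [add_pow]
  refine AddSubgroup.sum_mem _ fun i _ => ?_
  rw [← Nat.cast_comm, ← nsmul_eq_mul]
  exact AddSubgroup.nsmul_mem _ (AddSubgroup.subset_closure
    (Set.mul_mem_mul (Set.mem_range_self i) (Set.mem_range_self (n - i)))) _

theorem IsPowerBounded.of_mem_subring {R : Subring B} (hR : IsBoundedSubset (R : Set B))
    {a : B} (ha : a ∈ R) : IsPowerBounded a :=
  hR.mono fun _ ⟨n, _, hx⟩ => hx ▸ pow_mem ha n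

end Bounded

section Closure

variable {A B : Type*} [CommRing A] [TopologicalSpace A] [CommRing B] [TopologicalSpace B]

theorem IsBoundedSubset.of_image_of_isInducing {f : A →+* B} (hf : IsInducing f)
    {S : Set A} (hS : IsBoundedSubset (f '' S)) : IsBoundedSubset S := by
  intro U hU
  rw [hf.nhds_eq_comap, map_zero, mem_comap] at hU
  obtain ⟨W, hW, hWU⟩ := hU
  obtain ⟨V, hV, hVS⟩ := hS W hW
  refine ⟨f ⁻¹' V, hf.continuous.tendsto' 0 0 (map_zero f) hV, fun v hv s hs => hWU ?_⟩
  simpa using hVS (f v) hv (f s) ⟨s, hs, rfl⟩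

variable [IsTopologicalRing B] [RegularSpace B]

theorem IsBoundedSubset.closure {S : Set B} (hS : IsBoundedSubset S) :
    IsBoundedSubset (closure S) := by
  intro U hU
  obtain ⟨U', ⟨hU', hU'closed⟩, hU'U⟩ := (closed_nhds_basis 0).mem_iff.1 hU
  obtain ⟨V, hV, hVS⟩ := hS U' hU'
  exact ⟨V, hV, fun v hv x hx => hU'U <| hU'closed.closure_subset <|
    map_mem_closure (continuous_const_mul v) hx fun s hs => hVS v hv s hs⟩

theorem IsBoundedSubset.image_of_isDenseInducing {f : A →+* B} (hf : IsDenseInducing f)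
    {S : Set A} (hS : IsBoundedSubset S) : IsBoundedSubset (f '' S) := by
  intro U hU
  obtain ⟨U', ⟨hU', hU'closed⟩, hU'U⟩ := (closed_nhds_basis 0).mem_iff.1 hU
  obtain ⟨V, hV, hVS⟩ := hS (f ⁻¹' U') (hf.continuous.tendsto' 0 0 (map_zero f) hU')
  refine ⟨_root_.closure (f '' V), by simpa using hf.closure_image_mem_nhds hV, ?_⟩
  rintro w hw _ ⟨s, hs, rfl⟩
  refine hU'U <| hU'closed.closure_subset <|
    map_mem_closure (f := (· * f s)) (continuous_mul_const (f s)) hw ?_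
  rintro _ ⟨v, hv, rfl⟩
  simpa using hVS v hv s hs

theorem isPowerBounded_map_iff {f : A →+* B} (hf : IsDenseInducing f) {a : A} :
    IsPowerBounded (f a) ↔ IsPowerBounded a := by
  have hrange : f '' Set.range (a ^ · : ℕ → A) = Set.range (f a ^ · : ℕ → B) := by
    rw [← Set.range_comp]
    simp [Function.comp_def]
  rw [isPowerBounded_iff_isBoundedSubset_range_pow, isPowerBounded_iff_isBoundedSubset_range_pow,
    ← hrange]
  exact ⟨fun h => h.of_image_of_isInducing hf.isInducing, fun h => h.image_of_isDenseInducing hf⟩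

end Closure

theorem isClopen_of_forall_add_mem {G : Type*} [AddGroup G] [TopologicalSpace G]
    [IsTopologicalAddGroup G] {P N : Set G} (hN : N ∈ 𝓝 0) (hP : ∀ p ∈ P, ∀ n ∈ N, p + n ∈ P) :
    IsClopen P := by
  constructor
  · rw [← isOpen_compl_iff, isOpen_iff_mem_nhds]
    intro x hx
    have : {y | -y + x ∈ N} ∈ 𝓝 x :=
      (continuous_neg.add continuous_const).tendsto' x 0 (neg_add_cancel x) hN
    filter_upwards [this] with y hy hyP
    exact hx (by simpa using hP y hyP _ hy)
  · rw [isOpen_iff_mem_nhds]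
    intro x hx
    have : {y | -x + y ∈ N} ∈ 𝓝 x :=
      (continuous_const.add continuous_id).tendsto' x 0 (neg_add_cancel x) hN
    filter_upwards [this] with y hy
    simpa using hP x hx _ hy

theorem closure_image_powerBounded_eq {A B : Type*} [CommRing A] [TopologicalSpace A] [CommRing B]
    [TopologicalSpace B] [NonarchimedeanRing B] [RegularSpace B] {f : A →+* B}
    (hf : IsDenseInducing f) {N : Set B} (hN : N ∈ 𝓝 0) (hNP : N ⊆ powerBounded B) :
    closure (f '' powerBounded A) = powerBounded B := by
  have hP : IsClopen (powerBounded B) :=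
    isClopen_of_forall_add_mem hN fun p hp n hn => IsPowerBounded.add hp (hNP hn)
  have himage : f '' powerBounded A = powerBounded B ∩ Set.range f := by
    ext x
    constructor
    · rintro ⟨a, ha, rfl⟩
      exact ⟨(isPowerBounded_map_iff hf).2 ha, a, rfl⟩
    · rintro ⟨hx, a, rfl⟩
      exact ⟨a, (isPowerBounded_map_iff hf).1 hx, rfl⟩
  rw [himage]
  exact (closure_minimal Set.inter_subset_left hP.isClosed).antisymm
    (hf.dense.open_subset_closure_inter hP.isOpen)

section RingOfDefinition

variable {A : Type*} [CommRing A] [TopologicalSpace A] {A₀ : Subring A}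

theorem IsRingOfDefinition.isBoundedSubset (h : IsRingOfDefinition A₀) :
    IsBoundedSubset (A₀ : Set A) := by
  obtain ⟨-, I₀, -, hbasis⟩ := h
  intro U hU
  obtain ⟨n, hn, hnU⟩ := hbasis.mem_iff.1 hU
  refine ⟨_, hbasis.mem_of_mem hn, ?_⟩
  rintro _ ⟨v, hv, rfl⟩ s hs
  exact hnU ⟨v * ⟨s, hs⟩, Ideal.mul_mem_right _ _ hv, rfl⟩

theorem IsRingOfDefinition.nonarchimedeanRing [IsTopologicalRing A] (h : IsRingOfDefinition A₀) :
    NonarchimedeanRing A where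
  is_nonarchimedean U hU := by
    obtain ⟨-, I₀, -, hbasis⟩ := h
    obtain ⟨n, hn, hnU⟩ := hbasis.mem_iff.1 hU
    let W : AddSubgroup A := (I₀ ^ n).toAddSubgroup.map A₀.subtype.toAddMonoidHom
    exact ⟨⟨W, W.isOpen_of_mem_nhds (hbasis.mem_of_mem hn)⟩, hnU⟩

end RingOfDefinition

theorem statement8 {A : Type*} [CommRing A] [UniformSpace A] [IsUniformAddGroup A]
    [IsTopologicalRing A] (hA : IsFAdic A)
    (γ : A →+* UniformSpace.Completion A)
    (hγ : γ = UniformSpace.Completion.coeRingHom) :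
    closure (⇑γ '' powerBounded A) = powerBounded (UniformSpace.Completion A) := by
  obtain ⟨A₀, hA₀⟩ := hA
  have := hA₀.nonarchimedeanRing
  subst hγ
  have hγ : IsDenseInducing (UniformSpace.Completion.coeRingHom : A →+* _) :=
    UniformSpace.Completion.isDenseInducing_coe
  let Â₀ := (A₀.map UniformSpace.Completion.coeRingHom).topologicalClosure
  have hÂ₀ : IsBoundedSubset (Â₀ : Set (UniformSpace.Completion A)) :=
    (hA₀.isBoundedSubset.image_of_isDenseInducing hγ).closure
  refine closure_image_powerBounded_eq hγ (N := Â₀) ?_ fun x hx => .of_mem_subring hÂ₀ hx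
  have := hγ.closure_image_mem_nhds (hA₀.1.mem_nhds A₀.zero_mem)
  rwa [map_zero] at this
end

section
/- Let B be an f-adic ring, let A be an open subring of B, and let γ : B → B̂ be the canonical map to the completion of B. Then the smallest subring of B̂ containing γ(B) ∪ cl(γ(A)) is B̂ itself, where cl(γ(A)) denotes the topological closure of γ(A) in B̂. -/
open Filter Topology

open scoped Pointwise

/-!
Since `γ` is dense inducing and `A` is a neighbourhood of `0`, `cl(γ(A))` is a neighbourhood of `0`
in `B̂`; density of `γ(B)` then writes every `x ∈ B̂` as `γ(b) + a` with `a ∈ cl(γ(A))`.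
-/

@[to_additive]
theorem Dense.mul_eq_univ_of_mem_nhds_one {G : Type*} [Group G] [TopologicalSpace G]
    [IsTopologicalGroup G] {D U : Set G} (hD : Dense D) (hU : U ∈ 𝓝 (1 : G)) :
    D * U = Set.univ := by
  refine Set.eq_univ_of_forall fun x => ?_
  have hnhds : {y : G | y⁻¹ * x ∈ U} ∈ 𝓝 x := by
    have hcont : Continuous fun y : G => y⁻¹ * x := continuous_inv.mul continuous_const
    exact hcont.continuousAt.preimage_mem_nhds (by simpa using hU)
  obtain ⟨y, hyD, hyU⟩ := hD.inter_nhds_nonempty hnhds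
  exact ⟨y, hyD, y⁻¹ * x, hyU, mul_inv_cancel_left y x⟩

theorem Subring.closure_union_eq_top_of_add_eq_univ {R : Type*} [Ring R] {S T : Set R}
    (h : S + T = Set.univ) : Subring.closure (S ∪ T) = ⊤ := by
  refine eq_top_iff.2 fun x _ => ?_
  obtain ⟨s, hs, t, ht, rfl⟩ := h ▸ Set.mem_univ x
  exact add_mem (subset_closure (Or.inl hs)) (subset_closure (Or.inr ht))

theorem statement9_general {B : Type*} [CommRing B] [UniformSpace B] [IsUniformAddGroup B]
    [IsTopologicalRing B]
    (A : Subring B) (hA : IsOpen (A : Set B))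
    (γ : B →+* UniformSpace.Completion B)
    (hγ : γ = UniformSpace.Completion.coeRingHom) :
    Subring.closure (Set.range ⇑γ ∪ closure (⇑γ '' (A : Set B))) = ⊤ := by
  subst hγ
  have hclosure : closure (((↑) : B → UniformSpace.Completion B) '' A) ∈ 𝓝 0 := by
    rw [← UniformSpace.Completion.coe_zero]
    exact UniformSpace.Completion.isDenseInducing_coe.closure_image_mem_nhds
      (hA.mem_nhds A.zero_mem)
  exact Subring.closure_union_eq_top_of_add_eq_univ
    (Dense.add_eq_univ_of_mem_nhds_zero UniformSpace.Completion.denseRange_coe hclosure)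

theorem statement9 {B : Type*} [CommRing B] [UniformSpace B] [IsUniformAddGroup B]
    [IsTopologicalRing B] (hB : IsFAdic B)
    (A : Subring B) (hA : IsOpen (A : Set B))
    (γ : B →+* UniformSpace.Completion B)
    (hγ : γ = UniformSpace.Completion.coeRingHom) :
    Subring.closure (Set.range ⇑γ ∪ closure (⇑γ '' (A : Set B))) = ⊤ :=
  statement9_general A hA γ hγ
end

section
/- Let B be an f-adic ring, let A be an open subring of B, and let γ : B → B̂ be the canonical map to the completion of B. If every element of B is integral over the subring A, then every element of B̂ is integral over the subring cl(γ(A)), the topological closure of γ(A) in B̂. -/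
open Filter Topology

/-! Since `A` is open, the closure `S` of `γ(A)` is a neighbourhood of `0` in `B̂`, so by
density of `γ(B)` every `β` can be written `γ b - s` with `s ∈ S`. Here `γ b` is integral over
`S` because `b` is integral over `A`, and `s` trivially is, hence so is their difference. -/

theorem Dense.exists_sub_mem_of_mem_nhds_zero {G : Type*} [AddGroup G] [TopologicalSpace G]
    [IsTopologicalAddGroup G] {D S : Set G} (hD : Dense D) (hS : S ∈ 𝓝 (0 : G)) (x : G) :
    ∃ d ∈ D, d - x ∈ S := by
  have hSx : {y | y - x ∈ S} ∈ 𝓝 x :=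
    (continuous_id.sub continuous_const).continuousAt.preimage_mem_nhds (by simpa using hS)
  exact mem_closure_iff_nhds.1 (hD x) _ hSx |>.imp fun d hd => ⟨hd.2, hd.1⟩

theorem IsIntegral.map_of_map_le {B C : Type*} [CommRing B] [CommRing C] (f : B →+* C)
    {A : Subring B} {S : Subring C} (hAS : A.map f ≤ S) {b : B} (hb : IsIntegral A b) :
    IsIntegral S (f b) :=
  hb.map_of_comp_eq ((f.comp A.subtype).codRestrict S fun a => hAS ⟨a, a.2, rfl⟩) f rfl

theorem isIntegral_of_denseRange_of_mem_nhds_zero {B C : Type*} [CommRing B] [CommRing C]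
    [TopologicalSpace C] [IsTopologicalAddGroup C] (f : B →+* C) (hf : DenseRange f)
    {A : Subring B} {S : Subring C} (hAS : A.map f ≤ S) (hS : (S : Set C) ∈ 𝓝 0)
    (hint : ∀ b : B, IsIntegral A b) (c : C) : IsIntegral S c := by
  obtain ⟨_, ⟨b, rfl⟩, hbc⟩ := hf.exists_sub_mem_of_mem_nhds_zero hS c
  rw [← sub_sub_cancel (f b) c]
  exact (hint b).map_of_map_le f hAS |>.sub
    (isIntegral_algebraMap (R := S) (x := (⟨f b - c, hbc⟩ : S)))

theorem UniformSpace.Completion.closure_coe_image_mem_nhds_zero {B : Type*} [UniformSpace B]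
    [AddGroup B] [IsUniformAddGroup B] {U : Set B} (hU : U ∈ 𝓝 (0 : B)) :
    closure ((↑) '' U : Set (UniformSpace.Completion B)) ∈ 𝓝 0 := by
  have h := UniformSpace.Completion.isDenseInducing_coe.closure_image_mem_nhds hU
  rwa [UniformSpace.Completion.coe_zero] at h

theorem statement10_general {B : Type*} [CommRing B] [UniformSpace B] [IsUniformAddGroup B]
    [IsTopologicalRing B]
    (A : Subring B) (hA : IsOpen (A : Set B))
    (γ : B →+* UniformSpace.Completion B)
    (hγ : γ = UniformSpace.Completion.coeRingHom)
    (hint : ∀ b : B, IsIntegral A b) :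
    ∀ β : UniformSpace.Completion B, IsIntegral ((A.map γ).topologicalClosure) β := by
  subst hγ
  refine isIntegral_of_denseRange_of_mem_nhds_zero _ UniformSpace.Completion.denseRange_coe
    (Subring.le_topologicalClosure _) ?_ hint
  exact UniformSpace.Completion.closure_coe_image_mem_nhds_zero (hA.mem_nhds A.zero_mem)

theorem statement10 {B : Type*} [CommRing B] [UniformSpace B] [IsUniformAddGroup B]
    [IsTopologicalRing B] (hB : IsFAdic B)
    (A : Subring B) (hA : IsOpen (A : Set B))
    (γ : B →+* UniformSpace.Completion B)
    (hγ : γ = UniformSpace.Completion.coeRingHom)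
    (hint : ∀ b : B, IsIntegral A b) :
    ∀ β : UniformSpace.Completion B, IsIntegral ((A.map γ).topologicalClosure) β :=
  statement10_general A hA γ hγ hint
end

section
/- Let A and B be topological commutative rings, let θ : A → Â be the canonical map to the completion of A, and let φ : A → B be a continuous ring homomorphism. Assume: (1) there exists a continuous ring homomorphism ψ : B → Â such that θ = ψ ∘ φ; (2) for every neighbourhood V of 0 in B there exists a neighbourhood W of 0 in Â such that ψ⁻¹(W) ⊆ V. Then the induced continuous ring homomorphism φ̂ : Â → B̂ between the completions is bijective and is an open map; in particular, φ̂ is an isomorphism of topological rings. -/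
open Filter Topology

/-!
The extension `Ψ : B̂ → Â` of `ψ` is a continuous two-sided inverse of `φ̂`. Since `ψ ∘ φ = θ`,
`Ψ ∘ φ̂` extends `θ` and is therefore the identity. The neighbourhood condition says that `ψ` is
inducing, so `φ(A)`, whose image under `ψ` is the dense set `θ(A)`, is dense in `B`; the
continuous maps `φ̂ ∘ Ψ` and `id` agree on the dense image of `A` in `B̂`, hence everywhere.
-/

theorem Topology.IsInducing.denseRange_of_comp {X Y Z : Type*} [TopologicalSpace Y]
    [TopologicalSpace Z] {f : X → Y} {g : Y → Z} (hg : IsInducing g) (hgf : DenseRange (g ∘ f)) :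
    DenseRange f := by
  rw [DenseRange, dense_iff_closure_eq, hg.closure_eq_preimage_closure_image, ← Set.range_comp,
    hgf.closure_range, Set.preimage_univ]

theorem IsTopologicalAddGroup.isInducing_of_comap_nhds_zero_le {G H F : Type*}
    [AddGroup G] [TopologicalSpace G] [IsTopologicalAddGroup G]
    [AddGroup H] [TopologicalSpace H] [IsTopologicalAddGroup H]
    [FunLike F G H] [AddMonoidHomClass F G H] {f : F} (hf : Continuous f)
    (h : comap f (𝓝 0) ≤ 𝓝 (0 : G)) : IsInducing f :=
  isInducing_iff_nhds_zero.2 <| le_antisymm (map_zero f ▸ hf.tendsto 0).le_comap h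

namespace UniformSpace.Completion

variable {α β : Type*} [UniformSpace α] [UniformSpace β] {φ : α → β} {ψ : β → Completion α}

theorem leftInverse_extension_map (hφ : UniformContinuous φ) (hψ : UniformContinuous ψ)
    (hψφ : ∀ a, ψ (φ a) = a) :
    Function.LeftInverse (Completion.extension ψ) (Completion.map φ) := by
  have hcomp : Completion.extension ψ ∘ Completion.map φ = id := by
    rw [extension_map hψ hφ, show ψ ∘ φ = id ∘ (↑) from funext hψφ,
      extension_comp_coe uniformContinuous_id]
  exact congrFun hcomp

theorem rightInverse_extension_map (hφ : UniformContinuous φ) (hψ : UniformContinuous ψ)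
    (hψφ : ∀ a, ψ (φ a) = a) (hdense : DenseRange φ) :
    Function.RightInverse (Completion.extension ψ) (Completion.map φ) :=
  congrFun <| (denseRange_coe.comp hdense (continuous_coe β)).equalizer
    (continuous_map.comp continuous_extension) continuous_id <| funext fun a => by
      simp only [Function.comp_apply, extension_coe hψ, hψφ, map_coe hφ]

end UniformSpace.Completion

theorem statement13 {A B : Type*}
    [CommRing A] [UniformSpace A] [IsUniformAddGroup A] [IsTopologicalRing A]
    [CommRing B] [UniformSpace B] [IsUniformAddGroup B] [IsTopologicalRing B]
    (φ : A →+* B) (hφ : Continuous ⇑φ)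
    (ψ : B →+* UniformSpace.Completion A) (hψ : Continuous ⇑ψ)
    (hcomp : (UniformSpace.Completion.coeRingHom : A →+* UniformSpace.Completion A)
        = ψ.comp φ)
    (hnbhd : ∀ V ∈ 𝓝 (0 : B), ∃ W ∈ 𝓝 (0 : UniformSpace.Completion A), ⇑ψ ⁻¹' W ⊆ V) :
    Function.Bijective ⇑(UniformSpace.Completion.mapRingHom φ hφ) ∧
      IsOpenMap ⇑(UniformSpace.Completion.mapRingHom φ hφ) := by
  open UniformSpace.Completion in
  have hψφ (a : A) : ψ (φ a) = a := (RingHom.congr_fun hcomp a).symm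
  have hφu := uniformContinuous_addMonoidHom_of_continuous hφ
  have hψu := uniformContinuous_addMonoidHom_of_continuous hψ
  have hψind : IsInducing ψ := IsTopologicalAddGroup.isInducing_of_comap_nhds_zero_le hψ
    fun V hV => let ⟨W, hW, hWV⟩ := hnbhd V hV; mem_comap.2 ⟨W, hW, hWV⟩
  have hdense : DenseRange φ :=
    hψind.denseRange_of_comp ((funext hψφ : ⇑ψ ∘ ⇑φ = (↑)) ▸ denseRange_coe)
  have hleft := leftInverse_extension_map hφu hψu hψφ
  have hright := rightInverse_extension_map hφu hψu hψφ hdense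
  rw [coe_mapRingHom]
  exact ⟨⟨hleft.injective, hright.surjective⟩,
    IsOpenMap.of_inverse continuous_extension hright hleft⟩
end

section
/- Let R, A, B be topological commutative rings and let φ : R → A and ψ : R → B be continuous ring homomorphisms. Let T be a topological commutative ring together with continuous ring homomorphisms f : A → T and g : B → T satisfying f ∘ φ = g ∘ ψ, and suppose (T, f, g) has the following universal property: for every f-adic ring C and all continuous ring homomorphisms f' : A → C, g' : B → C with f' ∘ φ = g' ∘ ψ, there exists a unique continuous ring homomorphism θ : T → C with f' = θ ∘ f and g' = θ ∘ g. Then, regarding A and B as R-algebras via φ and ψ, the canonical ring homomorphism A ⊗_R B → T induced by f and g is bijective. -/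
open Filter Topology

/-!
An indiscrete topological ring is f-adic (the whole ring is a ring of definition, with the unit
ideal as ideal of definition), and every map into it is continuous. So the universal property
may be tested against `A ⊗[R] B` with the indiscrete topology, which gives `θ : T → A ⊗[R] B`
inverting the canonical map on pure tensors; and against `T` itself, retopologized indiscretely,
where uniqueness forces the canonical map composed with `θ` to be the identity.
-/

open TensorProduct Algebra.TensorProduct

theorem IndiscreteTopology.isTopologicalRing (C : Type*) [CommRing C] [TopologicalSpace C]
    [IndiscreteTopology C] : IsTopologicalRing C where
  continuous_add := continuous_of_indiscreteTopology
  continuous_mul := continuous_of_indiscreteTopology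
  continuous_neg := continuous_of_indiscreteTopology

theorem IndiscreteTopology.isFAdic (C : Type*) [CommRing C] [TopologicalSpace C]
    [IndiscreteTopology C] : IsFAdic C := by
  refine ⟨⊤, isOpen_univ, ⊤, Ideal.fg_top _, ?_⟩
  rw [IndiscreteTopology.nhds_eq]
  refine ⟨fun U => ⟨fun hU => ⟨1, le_rfl, by simp_all⟩, fun ⟨n, _, hn⟩ => ?_⟩⟩
  rw [Ideal.top_pow] at hn
  simpa using hn

theorem Algebra.TensorProduct.leftInverse_productMap {R A B T : Type*} [CommSemiring R]
    [CommSemiring A] [Algebra R A] [CommSemiring B] [Algebra R B] [CommSemiring T] [Algebra R T]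
    (f : A →ₐ[R] T) (g : B →ₐ[R] T) (θ : T →+* A ⊗[R] B)
    (hf : θ.comp f = includeLeftRingHom) (hg : θ.comp g = includeRight.toRingHom) :
    Function.LeftInverse θ (productMap f g) := by
  intro x
  induction x with
  | zero => simp
  | tmul a b =>
    have hfa : θ (f a) = a ⊗ₜ 1 := RingHom.congr_fun hf a
    have hgb : θ (g b) = 1 ⊗ₜ b := RingHom.congr_fun hg b
    rw [productMap_apply_tmul, map_mul, hfa, hgb, tmul_mul_tmul, mul_one, one_mul]
  | add x y hx hy => rw [map_add, map_add, hx, hy]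

universe u

theorem statement14_general {R A B T : Type u}
    [CommRing R]
    [CommRing A] [TopologicalSpace A]
    [CommRing B] [TopologicalSpace B]
    [CommRing T] [TopologicalSpace T]
    (φ : R →+* A) (ψ : R →+* B)
    (f : A →+* T) (g : B →+* T)
    (hcomm : f.comp φ = g.comp ψ)
    (huniv : ∀ (C : Type u) [CommRing C] [TopologicalSpace C] [IsTopologicalRing C],
      IsFAdic C → ∀ (f' : A →+* C) (g' : B →+* C), Continuous ⇑f' → Continuous ⇑g' →
        f'.comp φ = g'.comp ψ →
        ∃! θ : T →+* C, Continuous ⇑θ ∧ f' = θ.comp f ∧ g' = θ.comp g) :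
    letI : Algebra R A := φ.toAlgebra
    letI : Algebra R B := ψ.toAlgebra
    letI : Algebra R T := (f.comp φ).toAlgebra
    Function.Bijective
      ⇑(Algebra.TensorProduct.productMap
          ({ toRingHom := f, commutes' := fun r => rfl } : A →ₐ[R] T)
          ({ toRingHom := g,
             commutes' := fun r => (RingHom.congr_fun hcomm r).symm } : B →ₐ[R] T)) := by
  let _ : Algebra R A := φ.toAlgebra
  let _ : Algebra R B := ψ.toAlgebra
  let _ : Algebra R T := (f.comp φ).toAlgebra
  set P := productMap ({ toRingHom := f, commutes' := fun r => rfl } : A →ₐ[R] T)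
    { toRingHom := g, commutes' := fun r => (RingHom.congr_fun hcomm r).symm }
  let _ : TopologicalSpace (A ⊗[R] B) := ⊤
  have := IndiscreteTopology.isTopologicalRing (A ⊗[R] B)
  obtain ⟨θ, ⟨-, hθf, hθg⟩, -⟩ := huniv (A ⊗[R] B) (IndiscreteTopology.isFAdic _)
    includeLeftRingHom includeRight.toRingHom continuous_of_indiscreteTopology
    continuous_of_indiscreteTopology includeLeftRingHom_comp_algebraMap
  have hleft : Function.LeftInverse θ P := leftInverse_productMap _ _ θ hθf.symm hθg.symm
  have hright : Function.RightInverse θ P := by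
    let _ : TopologicalSpace T := ⊤
    have := IndiscreteTopology.isTopologicalRing T
    have hPθf : f = (P.toRingHom.comp θ).comp f := by
      ext a
      exact (productMap_left_apply _ _ a).symm.trans (congrArg P (RingHom.congr_fun hθf a))
    have hPθg : g = (P.toRingHom.comp θ).comp g := by
      ext b
      exact (productMap_right_apply _ _ b).symm.trans (congrArg P (RingHom.congr_fun hθg b))
    have hPθ : P.toRingHom.comp θ = RingHom.id T :=
      (huniv T (IndiscreteTopology.isFAdic T) f g continuous_of_indiscreteTopology
        continuous_of_indiscreteTopology hcomm).unique
        ⟨continuous_of_indiscreteTopology, hPθf, hPθg⟩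
        ⟨continuous_of_indiscreteTopology, rfl, rfl⟩
    exact RingHom.congr_fun hPθ
  exact ⟨hleft.injective, hright.surjective⟩

theorem statement14 {R A B T : Type u}
    [CommRing R] [TopologicalSpace R] [IsTopologicalRing R]
    [CommRing A] [TopologicalSpace A] [IsTopologicalRing A]
    [CommRing B] [TopologicalSpace B] [IsTopologicalRing B]
    [CommRing T] [TopologicalSpace T] [IsTopologicalRing T]
    (φ : R →+* A) (hφ : Continuous ⇑φ) (ψ : R →+* B) (hψ : Continuous ⇑ψ)
    (f : A →+* T) (hf : Continuous ⇑f) (g : B →+* T) (hg : Continuous ⇑g)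
    (hcomm : f.comp φ = g.comp ψ)
    (huniv : ∀ (C : Type u) [CommRing C] [TopologicalSpace C] [IsTopologicalRing C],
      IsFAdic C → ∀ (f' : A →+* C) (g' : B →+* C), Continuous ⇑f' → Continuous ⇑g' →
        f'.comp φ = g'.comp ψ →
        ∃! θ : T →+* C, Continuous ⇑θ ∧ f' = θ.comp f ∧ g' = θ.comp g) :
    letI : Algebra R A := φ.toAlgebra
    letI : Algebra R B := ψ.toAlgebra
    letI : Algebra R T := (f.comp φ).toAlgebra
    Function.Bijective
      ⇑(Algebra.TensorProduct.productMap
          ({ toRingHom := f, commutes' := fun r => rfl } : A →ₐ[R] T)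
          ({ toRingHom := g,
             commutes' := fun r => (RingHom.congr_fun hcomm r).symm } : B →ₐ[R] T)) :=
  statement14_general φ ψ f g hcomm huniv
end

section
/- Let A be a commutative ring, I an ideal of A, and f₁, …, f_r elements of A such that I together with f₁, …, f_r generate the unit ideal of A. Let 0 → M₁ → M₂ → M₃ → 0 be a short exact sequence of A-modules. If for M = M₁ and for M = M₃ the sequence 0 → M^Z → ∏_{1 ≤ i ≤ r} M^Z_{f_i} → ∏_{1 ≤ i < j ≤ r} M^Z_{f_i f_j} (with first map induced by the localization maps and second map given by differences of the (i,j)-components) is exact, then this sequence is also exact for M = M₂. -/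
open scoped TensorProduct

/-- The submonoid `{1 + x | x ∈ J}` of a commutative ring. -/
def onePlus {R : Type*} [CommRing R] (J : Ideal R) : Submonoid R where
  carrier := {r | ∃ x ∈ J, r = 1 + x}
  one_mem' := ⟨0, J.zero_mem, by ring⟩
  mul_mem' := by
    rintro a b ⟨x, hx, rfl⟩ ⟨y, hy, rfl⟩
    exact ⟨x + y + x * y, J.add_mem (J.add_mem hx hy) (J.mul_mem_right y hx), by ring⟩

variable {A : Type*} [CommRing A]

/-- `(1 + I)⁻¹ A`. -/
noncomputable abbrev ZRing (I : Ideal A) := Localization (onePlus I)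

/-- `(1 + I·A_g)⁻¹ A_g`. -/
noncomputable abbrev ZRingAt (I : Ideal A) (g : A) :=
  Localization (onePlus (Ideal.map (algebraMap A (Localization.Away g)) I))

lemma onePlus_le_comap (I : Ideal A) (g : A) :
    onePlus I ≤ Submonoid.comap (algebraMap A (Localization.Away g))
      (onePlus (Ideal.map (algebraMap A (Localization.Away g)) I)) := by
  rintro r ⟨x, hx, rfl⟩
  exact ⟨algebraMap A (Localization.Away g) x, Ideal.mem_map_of_mem _ hx, by
    rw [map_add, map_one]⟩

/-- The canonical map `(1+I)⁻¹A → (1+I·A_g)⁻¹A_g`. -/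
noncomputable def zMap (I : Ideal A) (g : A) : ZRing I →+* ZRingAt I g :=
  IsLocalization.map (ZRingAt I g) (algebraMap A (Localization.Away g)) (onePlus_le_comap I g)

/-- The canonical map `(1+I)⁻¹A → (1+I·A_g)⁻¹A_g` as an `A`-algebra map. -/
noncomputable def zMapAlg (I : Ideal A) (g : A) : ZRing I →ₐ[A] ZRingAt I g where
  toRingHom := zMap I g
  commutes' a := by
    show zMap I g (algebraMap A (ZRing I) a) = algebraMap A (ZRingAt I g) a
    have h1 : zMap I g (algebraMap A (ZRing I) a)
        = algebraMap (Localization.Away g) (ZRingAt I g) (algebraMap A (Localization.Away g) a) :=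
      IsLocalization.map_eq (onePlus_le_comap I g) a
    rw [h1, ← IsScalarTower.algebraMap_apply]

/-- The canonical map between localizations away from `g` and away from `k = g*h`. -/
noncomputable def zAwayMap (g k h : A) (hk : g * h = k) :
    Localization.Away g →+* Localization.Away k :=
  IsLocalization.Away.lift (S := Localization.Away g) g
    (g := algebraMap A (Localization.Away k))
    (IsLocalization.Away.isUnit_of_dvd k ⟨h, hk.symm⟩)

lemma zAwayMap_algebraMap (g k h : A) (hk : g * h = k) (a : A) :
    zAwayMap g k h hk (algebraMap A (Localization.Away g) a)
      = algebraMap A (Localization.Away k) a :=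
  IsLocalization.Away.lift_eq g _ a

lemma onePlus_le_comap_trans (I : Ideal A) (g k h : A) (hk : g * h = k) :
    onePlus (Ideal.map (algebraMap A (Localization.Away g)) I) ≤
      Submonoid.comap (zAwayMap g k h hk)
        (onePlus (Ideal.map (algebraMap A (Localization.Away k)) I)) := by
  rintro r ⟨x, hx, rfl⟩
  refine ⟨zAwayMap g k h hk x, ?_, by rw [map_add, map_one]⟩
  have h2 := Ideal.mem_map_of_mem (zAwayMap g k h hk) hx
  rw [Ideal.map_map,
    show (zAwayMap g k h hk).comp (algebraMap A (Localization.Away g))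
      = algebraMap A (Localization.Away k) from
        RingHom.ext fun a => zAwayMap_algebraMap g k h hk a] at h2
  exact h2

/-- The canonical map `(1+I·A_g)⁻¹A_g → (1+I·A_k)⁻¹A_k` when `k = g * h`. -/
noncomputable def zTrans (I : Ideal A) (g k h : A) (hk : g * h = k) :
    ZRingAt I g →+* ZRingAt I k :=
  IsLocalization.map (ZRingAt I k) (zAwayMap g k h hk) (onePlus_le_comap_trans I g k h hk)

/-- The canonical map `(1+I·A_g)⁻¹A_g → (1+I·A_k)⁻¹A_k` as an `A`-algebra map. -/
noncomputable def zTransAlg (I : Ideal A) (g k h : A) (hk : g * h = k) :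
    ZRingAt I g →ₐ[A] ZRingAt I k where
  toRingHom := zTrans I g k h hk
  commutes' a := by
    show zTrans I g k h hk (algebraMap A (ZRingAt I g) a) = algebraMap A (ZRingAt I k) a
    have h1 : zTrans I g k h hk (algebraMap (Localization.Away g) (ZRingAt I g)
        (algebraMap A (Localization.Away g) a))
        = algebraMap (Localization.Away k) (ZRingAt I k)
            (zAwayMap g k h hk (algebraMap A (Localization.Away g) a)) :=
      IsLocalization.map_eq _ _
    rw [IsScalarTower.algebraMap_apply A (Localization.Away g) (ZRingAt I g) a, h1,
      zAwayMap_algebraMap, ← IsScalarTower.algebraMap_apply]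

section Sequence

variable (M : Type*) [AddCommGroup M] [Module A M]

/-- The map `M^Z → ∏_i M^Z_{f i}` induced by the canonical localization maps. -/
noncomputable def zFirstMap (I : Ideal A) {r : ℕ} (f : Fin r → A) :
    M ⊗[A] ZRing I →ₗ[A] ∀ i : Fin r, M ⊗[A] ZRingAt I (f i) :=
  LinearMap.pi fun i => TensorProduct.map LinearMap.id (zMapAlg I (f i)).toLinearMap

/-- The map `∏_i M^Z_{f i} → ∏_{i<j} M^Z_{f i * f j}` given by differences. -/
noncomputable def zSecondMap (I : Ideal A) {r : ℕ} (f : Fin r → A) :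
    (∀ i : Fin r, M ⊗[A] ZRingAt I (f i)) →ₗ[A]
      ∀ p : {p : Fin r × Fin r // p.1 < p.2}, M ⊗[A] ZRingAt I (f p.1.1 * f p.1.2) :=
  LinearMap.pi fun p =>
    (TensorProduct.map LinearMap.id
        (zTransAlg I (f p.1.1) (f p.1.1 * f p.1.2) (f p.1.2) rfl).toLinearMap).comp
      (LinearMap.proj p.1.1)
    - (TensorProduct.map LinearMap.id
        (zTransAlg I (f p.1.2) (f p.1.1 * f p.1.2) (f p.1.1) (mul_comm _ _)).toLinearMap).comp
      (LinearMap.proj p.1.2)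

end Sequence

section AuxProof

variable {A : Type*} [CommRing A]

instance zRingAt_flat (I : Ideal A) (g : A) : Module.Flat A (ZRingAt I g) :=
  Module.Flat.trans A (Localization.Away g) (ZRingAt I g)

lemma map_comm_aux {M N R R' : Type*} [AddCommGroup M] [Module A M] [AddCommGroup N] [Module A N]
    [AddCommGroup R] [Module A R] [AddCommGroup R'] [Module A R']
    (w : M →ₗ[A] N) (φ : R →ₗ[A] R') (x : M ⊗[A] R) :
    TensorProduct.map LinearMap.id φ (w.rTensor R x) =
      w.rTensor R' (TensorProduct.map LinearMap.id φ x) := by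
  have h1 : TensorProduct.map (LinearMap.id : N →ₗ[A] N) φ ∘ₗ w.rTensor R
      = TensorProduct.map w φ := by
    rw [LinearMap.rTensor, ← TensorProduct.map_comp, LinearMap.id_comp, LinearMap.comp_id]
  have h2 : w.rTensor R' ∘ₗ TensorProduct.map (LinearMap.id : M →ₗ[A] M) φ
      = TensorProduct.map w φ := by
    rw [LinearMap.rTensor, ← TensorProduct.map_comp, LinearMap.id_comp, LinearMap.comp_id]
  rw [← LinearMap.comp_apply, h1, ← h2, LinearMap.comp_apply]

variable {M N : Type*} [AddCommGroup M] [Module A M] [AddCommGroup N] [Module A N]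

lemma zFirstMap_nat (I : Ideal A) {r : ℕ} (f : Fin r → A) (w : M →ₗ[A] N)
    (η : M ⊗[A] ZRing I) (i : Fin r) :
    zFirstMap N I f (w.rTensor (ZRing I) η) i
      = w.rTensor (ZRingAt I (f i)) (zFirstMap M I f η i) := by
  simpa [zFirstMap] using map_comm_aux w (zMapAlg I (f i)).toLinearMap η

lemma zSecondMap_nat (I : Ideal A) {r : ℕ} (f : Fin r → A) (w : M →ₗ[A] N)
    (ξ : ∀ i : Fin r, M ⊗[A] ZRingAt I (f i)) (p : {p : Fin r × Fin r // p.1 < p.2}) :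
    zSecondMap N I f (fun i => w.rTensor (ZRingAt I (f i)) (ξ i)) p
      = w.rTensor (ZRingAt I (f p.1.1 * f p.1.2)) (zSecondMap M I f ξ p) := by
  simp only [zSecondMap, LinearMap.pi_apply, LinearMap.sub_apply, LinearMap.comp_apply,
    LinearMap.proj_apply, map_sub]
  rw [map_comm_aux, map_comm_aux]

lemma zSecond_comp_zFirst (I : Ideal A) {r : ℕ} (f : Fin r → A) (η : M ⊗[A] ZRing I) :
    zSecondMap M I f (zFirstMap M I f η) = 0 := by
  funext p
  obtain ⟨⟨i, j⟩, hij⟩ := p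
  have ringEq : (zTrans I (f i) (f i * f j) (f j) rfl).comp (zMap I (f i))
      = (zTrans I (f j) (f i * f j) (f i) (mul_comm _ _)).comp (zMap I (f j)) := by
    apply IsLocalization.ringHom_ext (onePlus I)
    ext a
    simp only [RingHom.comp_apply]
    rw [show zMap I (f i) (algebraMap A (ZRing I) a) = algebraMap A (ZRingAt I (f i)) a from
        (zMapAlg I (f i)).commutes a,
      show zMap I (f j) (algebraMap A (ZRing I) a) = algebraMap A (ZRingAt I (f j)) a from
        (zMapAlg I (f j)).commutes a,
      show zTrans I (f i) (f i * f j) (f j) rfl (algebraMap A (ZRingAt I (f i)) a)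
          = algebraMap A (ZRingAt I (f i * f j)) a from
        (zTransAlg I (f i) (f i * f j) (f j) rfl).commutes a,
      show zTrans I (f j) (f i * f j) (f i) (mul_comm _ _) (algebraMap A (ZRingAt I (f j)) a)
          = algebraMap A (ZRingAt I (f i * f j)) a from
        (zTransAlg I (f j) (f i * f j) (f i) (mul_comm _ _)).commutes a]
  have key : (zTransAlg I (f i) (f i * f j) (f j) rfl).toLinearMap ∘ₗ
        (zMapAlg I (f i)).toLinearMap
      = (zTransAlg I (f j) (f i * f j) (f i) (mul_comm _ _)).toLinearMap ∘ₗ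
        (zMapAlg I (f j)).toLinearMap :=
    LinearMap.ext fun x => RingHom.congr_fun ringEq x
  simp only [zSecondMap, zFirstMap, LinearMap.pi_apply, LinearMap.sub_apply,
    LinearMap.comp_apply, LinearMap.proj_apply, Pi.zero_apply]
  rw [← LinearMap.comp_apply, ← TensorProduct.map_comp, ← LinearMap.comp_apply,
    ← TensorProduct.map_comp, key, sub_self]

end AuxProof

set_option maxHeartbeats 1000000 in
theorem statement18 {A : Type*} [CommRing A] (I : Ideal A)
    {r : ℕ} (f : Fin r → A)
    (hgen : I ⊔ Ideal.span (Set.range f) = ⊤)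
    (M₁ M₂ M₃ : Type*) [AddCommGroup M₁] [Module A M₁] [AddCommGroup M₂] [Module A M₂]
    [AddCommGroup M₃] [Module A M₃]
    (u : M₁ →ₗ[A] M₂) (v : M₂ →ₗ[A] M₃)
    (hu : Function.Injective ⇑u) (hv : Function.Surjective ⇑v)
    (huv : LinearMap.range u = LinearMap.ker v)
    (h1 : Function.Injective ⇑(zFirstMap M₁ I f) ∧
      ∀ ξ : ∀ i : Fin r, M₁ ⊗[A] ZRingAt I (f i),
        zSecondMap M₁ I f ξ = 0 ↔ ∃ η : M₁ ⊗[A] ZRing I, zFirstMap M₁ I f η = ξ)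
    (h3 : Function.Injective ⇑(zFirstMap M₃ I f) ∧
      ∀ ξ : ∀ i : Fin r, M₃ ⊗[A] ZRingAt I (f i),
        zSecondMap M₃ I f ξ = 0 ↔ ∃ η : M₃ ⊗[A] ZRing I, zFirstMap M₃ I f η = ξ) :
    Function.Injective ⇑(zFirstMap M₂ I f) ∧
      ∀ ξ : ∀ i : Fin r, M₂ ⊗[A] ZRingAt I (f i),
        zSecondMap M₂ I f ξ = 0 ↔ ∃ η : M₂ ⊗[A] ZRing I, zFirstMap M₂ I f η = ξ := by
  classical
  have exact_uv : Function.Exact u v := LinearMap.exact_iff.mpr huv.symm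
  have exactZ := Module.Flat.rTensor_exact (ZRing I) exact_uv
  have exactAt : ∀ i : Fin r, Function.Exact (u.rTensor (ZRingAt I (f i)))
      (v.rTensor (ZRingAt I (f i))) :=
    fun i => Module.Flat.rTensor_exact (ZRingAt I (f i)) exact_uv
  have uinjAt : ∀ g : A, Function.Injective (u.rTensor (ZRingAt I g)) :=
    fun g => Module.Flat.rTensor_preserves_injective_linearMap u hu
  have uinjZ : Function.Injective (u.rTensor (ZRing I)) :=
    Module.Flat.rTensor_preserves_injective_linearMap u hu
  constructor
  · -- injectivity of zFirstMap M₂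
    have ker0 : ∀ z : M₂ ⊗[A] ZRing I, zFirstMap M₂ I f z = 0 → z = 0 := by
      intro z hz
      have h3z : zFirstMap M₃ I f (v.rTensor (ZRing I) z) = 0 := by
        funext i
        rw [zFirstMap_nat, congrFun hz i]
        simp
      have hz3 : v.rTensor (ZRing I) z = 0 := h3.1 (by rw [h3z, map_zero])
      obtain ⟨w₁, hw₁⟩ := (exactZ z).mp hz3
      have hw0 : zFirstMap M₁ I f w₁ = 0 := by
        funext i
        apply uinjAt (f i)
        rw [← zFirstMap_nat, hw₁, congrFun hz i]
        simp
      have : w₁ = 0 := h1.1 (by rw [hw0, map_zero])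
      rw [← hw₁, this, map_zero]
    intro x y hxy
    have : x - y = 0 := ker0 _ (by rw [map_sub, hxy, sub_self])
    exact sub_eq_zero.mp this
  · intro ξ
    constructor
    · intro hξ
      have hβ3 : zSecondMap M₃ I f (fun i => v.rTensor (ZRingAt I (f i)) (ξ i)) = 0 := by
        funext p
        rw [zSecondMap_nat, congrFun hξ p]
        simp
      obtain ⟨η₃, hη₃⟩ := (h3.2 _).mp hβ3
      obtain ⟨η₂, hη₂⟩ := LinearMap.rTensor_surjective (ZRing I) hv η₃
      set ξ' : ∀ i : Fin r, M₂ ⊗[A] ZRingAt I (f i) := ξ - zFirstMap M₂ I f η₂ with hξ'def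
      have hξ'v : ∀ i, v.rTensor (ZRingAt I (f i)) (ξ' i) = 0 := by
        intro i
        have : v.rTensor (ZRingAt I (f i)) (zFirstMap M₂ I f η₂ i)
            = v.rTensor (ZRingAt I (f i)) (ξ i) := by
          rw [← zFirstMap_nat, hη₂, hη₃]
        simp only [hξ'def, Pi.sub_apply, map_sub, this, sub_self]
      choose ξ₁ hξ₁ using fun i => ((exactAt i) (ξ' i)).mp (hξ'v i)
      have hβ1 : zSecondMap M₁ I f ξ₁ = 0 := by
        funext p
        simp only [Pi.zero_apply]
        apply uinjAt (f p.1.1 * f p.1.2)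
        rw [map_zero, ← zSecondMap_nat]
        have hfun : (fun i => u.rTensor (ZRingAt I (f i)) (ξ₁ i)) = ξ' := funext fun i => hξ₁ i
        rw [hfun]
        have : zSecondMap M₂ I f ξ' = 0 := by
          rw [hξ'def, map_sub, hξ, zSecond_comp_zFirst, sub_self]
        rw [this, Pi.zero_apply]
      obtain ⟨η₁, hη₁⟩ := (h1.2 ξ₁).mp hβ1
      refine ⟨η₂ + u.rTensor (ZRing I) η₁, ?_⟩
      funext i
      rw [map_add, Pi.add_apply, zFirstMap_nat, hη₁, hξ₁ i]
      simp [hξ'def]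
    · rintro ⟨η, rfl⟩
      exact zSecond_comp_zFirst I f η
end
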